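/- arXiv:2112.10914 — 2 statements merged into one kernel-verified Lean document; each statement's English description precedes it below -/
import Mathlib

section
/- Let (g,[·,·]) be a finite-dimensional Lie algebra over a field K of characteristic 0 and ω a nondegenerate skew-symmetric bilinear form on g satisfying the 2-cocycle condition ω([x,y],z) + ω([z,x],y) + ω([y,z],x) = 0 for all x,y,z ∈ g. Then there exists a bilinear product · on g determined by ω(x·y, z) = −ω(y,[x,z]) for all x,y,z ∈ g; this product satisfies the pre-Lie identity (x·y)·z − x·(y·z) = (y·x)·z − y·(x·z), and x·y − y·x = [x,y] for all x,y ∈ g. -/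
/-- A symplectic Lie algebra carries a compatible pre-Lie product determined by
`ω(x·y, z) = −ω(y,[x,z])`, whose commutator is the Lie bracket. -/
theorem symplectic_lie_algebra_gives_preLie {K : Type*} [Field K] [CharZero K]
    {g : Type*} [LieRing g] [LieAlgebra K g] [FiniteDimensional K g]
    (ω : g →ₗ[K] g →ₗ[K] K)
    (hskew : ∀ x y : g, ω x y = - ω y x)
    (hnondeg : ∀ x : g, (∀ y : g, ω x y = 0) → x = 0)
    (hcocycle : ∀ x y z : g, ω ⁅x, y⁆ z + ω ⁅z, x⁆ y + ω ⁅y, z⁆ x = 0) :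
    ∃ mul : g →ₗ[K] g →ₗ[K] g,
      (∀ x y z : g, ω (mul x y) z = - ω y ⁅x, z⁆) ∧
      (∀ x y z : g,
        mul (mul x y) z - mul x (mul y z) = mul (mul y x) z - mul y (mul x z)) ∧
      (∀ x y : g, mul x y - mul y x = ⁅x, y⁆) := by
  classical
  -- ω, viewed as a map to the dual, is injective hence bijective.
  have hinj : Function.Injective (ω : g →ₗ[K] Module.Dual K g) := by
    intro a b hab
    have h0 : a - b = 0 := by
      apply hnondeg
      intro y
      have h : ω a y = ω b y := by rw [hab]
      simp [map_sub, h]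
    exact sub_eq_zero.mp h0
  have hsurj : Function.Surjective (ω : g →ₗ[K] Module.Dual K g) :=
    (LinearMap.injective_iff_surjective_of_finrank_eq_finrank
      (Subspace.dual_finrank_eq (K := K) (V := g)).symm).mp hinj
  let e : g ≃ₗ[K] Module.Dual K g := LinearEquiv.ofBijective ω ⟨hinj, hsurj⟩
  have he : ∀ a : g, e a = ω a := fun a => rfl
  -- the functional z ↦ -ω y ⁅x, z⁆
  let F : g → g → Module.Dual K g := fun x y => -((ω y).comp (LieAlgebra.ad K g x))
  have hF : ∀ x y z : g, F x y z = - ω y ⁅x, z⁆ := by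
    intro x y z; simp [F, LieAlgebra.ad_apply]
  have haddl : ∀ x x' y : g, F (x + x') y = F x y + F x' y := by
    intro x x' y; ext z
    simp [hF]
    ring
  have hsmull : ∀ (c : K) (x y : g), F (c • x) y = c • F x y := by
    intro c x y; ext z
    simp [hF]
  have haddr : ∀ x y y' : g, F x (y + y') = F x y + F x y' := by
    intro x y y'; ext z; simp [hF]; ring
  have hsmulr : ∀ (c : K) (x y : g), F x (c • y) = c • F x y := by
    intro c x y; ext z; simp [hF]
  let mul : g →ₗ[K] g →ₗ[K] g := LinearMap.mk₂ K (fun x y => e.symm (F x y))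
    (fun x x' y => by
      show e.symm (F (x + x') y) = e.symm (F x y) + e.symm (F x' y)
      rw [haddl, map_add])
    (fun c x y => by
      show e.symm (F (c • x) y) = c • e.symm (F x y)
      rw [hsmull, map_smul])
    (fun x y y' => by
      show e.symm (F x (y + y')) = e.symm (F x y) + e.symm (F x y')
      rw [haddr, map_add])
    (fun c x y => by
      show e.symm (F x (c • y)) = c • e.symm (F x y)
      rw [hsmulr, map_smul])
  have key : ∀ x y z : g, ω (mul x y) z = - ω y ⁅x, z⁆ := by
    intro x y z
    have h1 : mul x y = e.symm (F x y) := rfl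
    have h2 : ω (e.symm (F x y)) = F x y := by
      rw [← he]; exact e.apply_symm_apply (F x y)
    rw [h1, h2, hF]
  -- to prove equality in g, it suffices to pair with ω against all z
  have sep : ∀ a b : g, (∀ z : g, ω a z = ω b z) → a = b := by
    intro a b h
    have h0 : a - b = 0 := by
      apply hnondeg; intro y; simp [map_sub, h y]
    exact sub_eq_zero.mp h0
  -- commutator is the bracket
  have comm : ∀ x y : g, mul x y - mul y x = ⁅x, y⁆ := by
    intro x y
    apply sep
    intro z
    have h1 := hcocycle x y z
    have h2 : ω ⁅x, z⁆ y = - ω ⁅z, x⁆ y := by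
      rw [← lie_skew z x, map_neg]; simp
    have h3 : ω ⁅y, z⁆ x = - ω ⁅z, y⁆ x := by
      rw [← lie_skew z y, map_neg]; simp
    have h4 := hskew y ⁅x, z⁆
    have h5 := hskew x ⁅y, z⁆
    have h6 := key x y z
    have h7 := key y x z
    have h8 : ω (mul x y - mul y x) z = ω (mul x y) z - ω (mul y x) z := by
      simp [map_sub]
    rw [h8, h6, h7]
    linear_combination -h4 + h2 + h5 - h1
  refine ⟨mul, key, ?_, comm⟩
  intro x y z
  apply sep
  intro w
  have expand : ∀ a b : g, mul (mul a b) z = mul ⁅a, b⁆ z + mul (mul b a) z := by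
    intro a b
    have : mul a b = ⁅a, b⁆ + mul b a := by rw [← comm a b]; abel
    rw [this, map_add, LinearMap.add_apply]
  have hx := expand x y
  have lhs : ω (mul (mul x y) z - mul x (mul y z)) w
      = ω (mul ⁅x, y⁆ z) w + ω (mul (mul y x) z) w - ω (mul x (mul y z)) w := by
    rw [hx]; simp [map_add, map_sub]
  have rhs : ω (mul (mul y x) z - mul y (mul x z)) w
      = ω (mul (mul y x) z) w - ω (mul y (mul x z)) w := by
    simp [map_sub]
  have e1 : ω (mul ⁅x, y⁆ z) w = - ω z ⁅⁅x, y⁆, w⁆ := key _ _ _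
  have e2 : ω (mul x (mul y z)) w = ω z ⁅y, ⁅x, w⁆⁆ := by
    rw [key x (mul y z) w, key y z ⁅x, w⁆]; ring
  have e3 : ω (mul y (mul x z)) w = ω z ⁅x, ⁅y, w⁆⁆ := by
    rw [key y (mul x z) w, key x z ⁅y, w⁆]; ring
  have jac : ω z ⁅⁅x, y⁆, w⁆ = ω z ⁅x, ⁅y, w⁆⁆ - ω z ⁅y, ⁅x, w⁆⁆ := by
    rw [lie_lie, map_sub]
  rw [lhs, rhs, e1, e2, e3]
  linear_combination -jac
end

section
/- Let (g,·) be a pre-Lie algebra over a field K of characteristic 0 and R: g → g a Rota–Baxter operator of weight λ, i.e. R(x)·R(y) = R(R(x)·y + x·R(y) + λ x·y) for all x,y ∈ g. Define x ·^R y := R(x)·y + x·R(y) + λ x·y. Then (g, ·^R) is a pre-Lie algebra (the product ·^R satisfies the pre-Lie identity), and R is a pre-Lie algebra homomorphism from (g, ·^R) to (g, ·), i.e. R(x ·^R y) = R(x)·R(y) for all x,y ∈ g. -/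
/-- The deformed product `x ·^R y := R(x)·y + x·R(y) + λ x·y` associated to a
Rota–Baxter operator `R` of weight `λ`. -/
def rbProd {K g : Type*} [Field K] [AddCommGroup g] [Module K g]
    (mul : g →ₗ[K] g →ₗ[K] g) (R : g →ₗ[K] g) (lam : K) (x y : g) : g :=
  mul (R x) y + mul x (R y) + lam • mul x y

/-- If `R` is a Rota–Baxter operator of weight `λ` on a pre-Lie algebra `(g,·)`,
then `·^R` is a pre-Lie product and `R` is a pre-Lie algebra homomorphism from
`(g, ·^R)` to `(g, ·)`. -/
theorem rotaBaxter_gives_preLie_and_hom {K : Type*} [Field K] [CharZero K]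
    {g : Type*} [AddCommGroup g] [Module K g]
    (mul : g →ₗ[K] g →ₗ[K] g)
    (hpre : ∀ x y z : g,
      mul (mul x y) z - mul x (mul y z) = mul (mul y x) z - mul y (mul x z))
    (R : g →ₗ[K] g) (lam : K)
    (hR : ∀ x y : g, mul (R x) (R y) = R (rbProd mul R lam x y)) :
    (∀ x y z : g,
      rbProd mul R lam (rbProd mul R lam x y) z - rbProd mul R lam x (rbProd mul R lam y z)
        = rbProd mul R lam (rbProd mul R lam y x) z
          - rbProd mul R lam y (rbProd mul R lam x z)) ∧
    (∀ x y : g, R (rbProd mul R lam x y) = mul (R x) (R y)) := by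
  constructor
  · intro x y z
    have hR' : ∀ a b : g, R (mul (R a) b + mul a (R b) + lam • mul a b) = mul (R a) (R b) := by
      intro a b; rw [← rbProd, ← hR]
    simp only [rbProd, hR']
    simp only [map_add, map_smul, LinearMap.map_smul₂, LinearMap.add_apply,
      LinearMap.smul_apply]
    linear_combination (norm := module)
      hpre (R x) (R y) z + hpre (R x) y (R z) + hpre x (R y) (R z)
      + lam • (hpre x y (R z) + hpre (R x) y z + hpre x (R y) z)
      + (lam * lam) • hpre x y z
  · intro x y
    exact (hR x y).symm
end
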